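/- Let μ be a probability measure on a measurable space S, let g : S → ℝ be measurable with g(s) > 0 for μ-almost every s and with 1/g μ-integrable and ∫ g⁻¹ dμ > 0, and let h : S → ℝ be measurable with h(s) ≥ 0 μ-almost everywhere. Set A_n = ∫ (n·g(s) + h(s))⁻¹ dμ(s), and let (B_n) and (C_n) be real sequences with n²·B_n and n²·C_n bounded. Then lim_{n→∞} n · A_n² / (A_n + B_n + C_n) = ∫ g(s)⁻¹ dμ(s). -/

import Mathlib

open MeasureTheory Filter

/-- Auxiliary: `n²·xₙ` bounded implies `n·xₙ → 0`. -/
lemma aux_sq_bounded_tendsto {x : ℕ → ℝ} (hx : ∃ M : ℝ, ∀ n : ℕ, |(n : ℝ) ^ 2 * x n| ≤ M) :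
    Tendsto (fun n : ℕ => (n : ℝ) * x n) atTop (nhds 0) := by
  obtain ⟨M, hM⟩ := hx
  refine squeeze_zero_norm (a := fun n : ℕ => M / n) (fun n => ?_)
    (tendsto_const_div_atTop_nhds_zero_nat M)
  rcases Nat.eq_zero_or_pos n with h0 | hn
  · simp [h0]
  · have hn' : (0:ℝ) < n := by exact_mod_cast hn
    rw [le_div_iff₀ hn']
    have e : ‖(n:ℝ) * x n‖ * n = |(n:ℝ)^2 * x n| := by
      rw [abs_mul, abs_of_nonneg (sq_nonneg (n:ℝ)), Real.norm_eq_abs, abs_mul,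
        abs_of_nonneg hn'.le]
      ring
    rw [e]; exact hM n

/-- With `A n = ∫ (n·g + h)⁻¹ dμ` and sequences `B`, `C` with `n²·Bₙ`, `n²·Cₙ`
bounded, the normalized ATBCRB ratio `n·Aₙ² / (Aₙ + Bₙ + Cₙ)` converges to `∫ g⁻¹ dμ`. -/
theorem tendsto_atbcrb_ratio
    {S : Type*} [MeasurableSpace S] (μ : Measure S) [IsProbabilityMeasure μ]
    (g h : S → ℝ) (hg : Measurable g) (hh : Measurable h)
    (hgpos : ∀ᵐ s ∂μ, 0 < g s)
    (hgint : Integrable (fun s => (g s)⁻¹) μ)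
    (hgintpos : 0 < ∫ s, (g s)⁻¹ ∂μ)
    (hhnonneg : ∀ᵐ s ∂μ, 0 ≤ h s)
    (A B C : ℕ → ℝ)
    (hA : ∀ n : ℕ, A n = ∫ s, ((n : ℝ) * g s + h s)⁻¹ ∂μ)
    (hB : ∃ M : ℝ, ∀ n : ℕ, |(n : ℝ) ^ 2 * B n| ≤ M)
    (hC : ∃ M : ℝ, ∀ n : ℕ, |(n : ℝ) ^ 2 * C n| ≤ M) :
    Tendsto (fun n : ℕ => (n : ℝ) * (A n) ^ 2 / (A n + B n + C n))
      atTop (nhds (∫ s, (g s)⁻¹ ∂μ)) := by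
  set L := ∫ s, (g s)⁻¹ ∂μ with hL
  have hLne : L ≠ 0 := ne_of_gt hgintpos
  -- Step 1: n * A n → L by dominated convergence
  have h1 : Tendsto (fun n : ℕ => (n : ℝ) * A n) atTop (nhds L) := by
    have key : ∀ n : ℕ, (n : ℝ) * A n = ∫ s, (n : ℝ) * ((n : ℝ) * g s + h s)⁻¹ ∂μ := by
      intro n; rw [hA n, integral_const_mul]
    refine Tendsto.congr (fun n => (key n).symm) ?_
    refine tendsto_integral_of_dominated_convergence (fun s => (g s)⁻¹) ?_ hgint ?_ ?_
    · intro n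
      exact (measurable_const.mul ((measurable_const.mul hg).add hh).inv).aestronglyMeasurable
    · intro n
      filter_upwards [hgpos, hhnonneg] with s hgs hhs
      rcases Nat.eq_zero_or_pos n with h0 | hn
      · simp [h0, inv_nonneg.mpr hgs.le]
      · have hn' : (0:ℝ) < n := by exact_mod_cast hn
        have hng : 0 < (n:ℝ) * g s := by positivity
        have hden : 0 < (n:ℝ) * g s + h s := by linarith
        have h2 : (n:ℝ) * ((n:ℝ) * g s + h s)⁻¹ ≤ (n:ℝ) * ((n:ℝ) * g s)⁻¹ := by
          apply mul_le_mul_of_nonneg_left _ hn'.le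
          exact inv_anti₀ hng (by linarith)
        have h3 : (n:ℝ) * ((n:ℝ) * g s)⁻¹ = (g s)⁻¹ := by
          rw [mul_inv]
          field_simp
        rw [Real.norm_eq_abs, abs_of_nonneg (by positivity)]
        rw [← h3]; exact h2
    · filter_upwards [hgpos, hhnonneg] with s hgs hhs
      have ht : Tendsto (fun n : ℕ => g s + h s * (n:ℝ)⁻¹) atTop (nhds (g s)) := by
        have h0 : Tendsto (fun n : ℕ => h s * (n:ℝ)⁻¹) atTop (nhds 0) := by
          simpa using tendsto_const_nhds.mul (tendsto_inv_atTop_nhds_zero_nat (𝕜 := ℝ))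
        simpa using tendsto_const_nhds.add h0
      refine (ht.inv₀ (ne_of_gt hgs)).congr' ?_
      filter_upwards [eventually_ge_atTop 1] with n hn
      have hn' : (0:ℝ) < n := by exact_mod_cast hn
      have e : g s + h s * (n:ℝ)⁻¹ = ((n:ℝ) * g s + h s) * (n:ℝ)⁻¹ := by
        field_simp
      rw [e, mul_inv, inv_inv, mul_comm]
  -- Step 2: n*B, n*C → 0
  have h2 := aux_sq_bounded_tendsto hB
  have h3 := aux_sq_bounded_tendsto hC
  -- Step 3: denominator n*(A+B+C) → L
  have hden : Tendsto (fun n : ℕ => (n:ℝ) * (A n + B n + C n)) atTop (nhds L) := by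
    have := (h1.add h2).add h3
    simp only [add_zero] at this
    refine this.congr fun n => ?_
    ring
  have hnum : Tendsto (fun n : ℕ => ((n:ℝ) * A n) ^ 2) atTop (nhds (L ^ 2)) := h1.pow 2
  have hratio := hnum.div hden hLne
  have hLL : L ^ 2 / L = L := by rw [sq, mul_div_assoc, div_self hLne, mul_one]
  rw [hLL] at hratio
  refine hratio.congr' ?_
  filter_upwards [eventually_ge_atTop 1] with n hn
  have hn0 : (n:ℝ) ≠ 0 := Nat.cast_ne_zero.mpr (by omega)
  simp only [Pi.div_apply]
  rw [mul_pow, pow_two (n:ℝ), mul_assoc, mul_div_mul_left _ _ hn0]
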